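/- arXiv:2003.11854 — 5 statements merged into one kernel-verified Lean document; each statement's English description precedes it below -/
import Mathlib

section
/- Let (Ω,μ) be a measure space, let r ∈ (0,∞], let m ∈ ℕ, and let E_1,…,E_m ⊆ Ω be pairwise disjoint measurable sets whose measures s_k := μ(E_k) satisfy 0 < s_k < ∞ and s_{k+1} ≤ s_k/2 for k = 1,…,m−1. Define u_k := s_k^{−1/r}·χ_{E_k} and u := ∑_{k=1}^m u_k. Then ‖u_k‖_{L^{r,∞}} = 1 for every k = 1,…,m, while ‖u‖_{L^{r,∞}} ≤ 2^{1/r}. -/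
open MeasureTheory ENNReal
open scoped NNReal
open Function

/-! On `E_k` the sum `u` takes the value `c_k = s_k^{-1/r}` and it vanishes off `⋃ E_k`, so the
level set `{|u| > λ}` is the union of the `E_k` with `c_k > λ`. If `k₀` is the least such index,
the halving condition bounds the measure of that union by `2 s_{k₀}`, while `λ < s_{k₀}^{-1/r}`;
hence `λ · μ{|u| > λ}^{1/r} ≤ 2^{1/r}`. For a single `u_k` the level set is `E_k` or empty, and the
supremum over `λ < c_k` is exactly `c_k s_k^{1/r} = 1`. -/

/-- The weak Lebesgue quasinorm `‖u‖_{L^{r,∞}} = sup_{λ>0} λ · μ{|u| > λ}^{1/r}`,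
with the convention that for `r = ∞` it is the essential supremum of `|u|`. -/
noncomputable def weakNorm {α : Type*} [MeasurableSpace α] (μ : Measure α)
    (r : ℝ≥0∞) (u : α → ℝ) : ℝ≥0∞ :=
  if r = ∞ then essSup (fun x => (‖u x‖₊ : ℝ≥0∞)) μ
  else ⨆ l : ℝ≥0, (l : ℝ≥0∞) * μ {x | (l : ℝ) < |u x|} ^ (1 / r.toReal)

lemma ofReal_toReal_rpow_neg_mul_rpow (p : ℝ) {s : ℝ≥0∞} (h0 : s ≠ 0) (htop : s ≠ ∞) :
    ENNReal.ofReal (s.toReal ^ (-p)) * s ^ p = 1 := by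
  rw [← ENNReal.ofReal_rpow_of_pos (ENNReal.toReal_pos h0 htop), ENNReal.ofReal_toReal htop,
    ← ENNReal.rpow_add _ _ h0 htop, neg_add_cancel, ENNReal.rpow_zero]

lemma iSup_ite_coe_lt_eq_ofReal (c : ℝ) :
    ⨆ l : ℝ≥0, (if (l : ℝ) < c then (l : ℝ≥0∞) else 0) = ENNReal.ofReal c := by
  refine le_antisymm (iSup_le fun l => ?_) ?_
  · split_ifs with hl
    · rw [← ENNReal.ofReal_coe_nnreal]
      exact ENNReal.ofReal_le_ofReal hl.le
    · exact zero_le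
  · rw [← ENNReal.iSup_lt_eq_self (ENNReal.ofReal c)]
    refine iSup₂_le fun b hb => le_iSup_of_le b.toNNReal ?_
    have hb' : (b.toNNReal : ℝ) < c := ENNReal.toReal_lt_of_lt_ofReal hb
    rw [if_pos hb', ENNReal.coe_toNNReal hb.ne_top]

section Sums

variable {α ι : Type*}

lemma setOf_lt_abs_mul_indicator {c l : ℝ} (hc : 0 ≤ c) (hl : 0 ≤ l) (E : Set α) :
    {x | l < |c * E.indicator 1 x|} = if l < c then E else ∅ := by
  ext x
  by_cases hx : x ∈ E <;> split_ifs with hlc <;> simp [hx, abs_of_nonneg hc, hlc, hl]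

lemma sum_mul_indicator_apply_of_mem [Fintype ι] {E : ι → Set α}
    (hE : Pairwise (Disjoint on E)) (c : ι → ℝ) {x : α} {k : ι} (hx : x ∈ E k) :
    ∑ j, c j * (E j).indicator 1 x = c k := by
  rw [Finset.sum_eq_single k]
  · simp [hx]
  · intro j _ hj
    simp [Set.indicator_of_notMem (Set.disjoint_left.mp (hE hj.symm) hx)]
  · simp

lemma setOf_lt_abs_sum_mul_indicator [Fintype ι] {E : ι → Set α}
    (hE : Pairwise (Disjoint on E)) (c : ι → ℝ) {l : ℝ} (hl : 0 ≤ l) :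
    {x | l < |∑ k, c k * (E k).indicator 1 x|} =
      ⋃ k ∈ Finset.univ.filter (fun k => l < |c k|), E k := by
  ext x
  simp only [Set.mem_ofPred_eq, Set.mem_iUnion, Finset.mem_filter, Finset.mem_univ, true_and,
    exists_prop]
  by_cases hx : ∃ k, x ∈ E k
  · obtain ⟨k, hk⟩ := hx
    rw [sum_mul_indicator_apply_of_mem hE c hk]
    exact ⟨fun h => ⟨k, h, hk⟩, fun ⟨j, hj, hxj⟩ => by
      rwa [← sum_mul_indicator_apply_of_mem hE c hxj,
        sum_mul_indicator_apply_of_mem hE c hk] at hj⟩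
  · push Not at hx
    simp [hx, hl]

end Sums

section Geometric

variable {m : ℕ} {s : Fin m → ℝ≥0∞} {q : ℝ≥0∞}

lemma le_mul_pow_sub_of_succ_le_mul
    (hs : ∀ (k : ℕ) (hk : k + 1 < m), s ⟨k + 1, hk⟩ ≤ s ⟨k, Nat.lt_of_succ_lt hk⟩ * q)
    {i j : Fin m} (hij : i ≤ j) : s j ≤ s i * q ^ (j - i : ℕ) := by
  obtain ⟨j, hj⟩ := j
  change i.1 ≤ j at hij
  induction j, hij using Nat.le_induction with
  | base => simp
  | succ n hin ih =>
    calc s ⟨n + 1, hj⟩ ≤ s ⟨n, _⟩ * q := hs n hj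
      _ ≤ s i * q ^ (n - i : ℕ) * q := by gcongr; exact ih _
      _ = s i * q ^ (n + 1 - i : ℕ) := by rw [Nat.sub_add_comm hin, pow_succ, mul_assoc]

lemma sum_le_mul_one_sub_inv_of_succ_le_mul
    (hs : ∀ (k : ℕ) (hk : k + 1 < m), s ⟨k + 1, hk⟩ ≤ s ⟨k, Nat.lt_of_succ_lt hk⟩ * q)
    (S : Finset (Fin m)) {k₀ : Fin m} (hk₀ : ∀ k ∈ S, k₀ ≤ k) :
    ∑ k ∈ S, s k ≤ s k₀ * (1 - q)⁻¹ := by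
  have hinj : Set.InjOn (fun k : Fin m => (k - k₀ : ℕ)) S := fun a ha b hb hab => by
    have := hk₀ a ha; have := hk₀ b hb
    simp only at hab
    omega
  calc ∑ k ∈ S, s k ≤ ∑ k ∈ S, s k₀ * q ^ (k - k₀ : ℕ) :=
        Finset.sum_le_sum fun k hk => le_mul_pow_sub_of_succ_le_mul hs (hk₀ k hk)
    _ = s k₀ * ∑ d ∈ S.image (fun k : Fin m => (k - k₀ : ℕ)), q ^ d := by
        rw [Finset.sum_image hinj, Finset.mul_sum]
    _ ≤ s k₀ * ∑' d, q ^ d := by gcongr; exact ENNReal.sum_le_tsum _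
    _ = s k₀ * (1 - q)⁻¹ := by rw [ENNReal.tsum_geometric]

end Geometric

section WeakNorm

variable {α : Type*} [MeasurableSpace α] {μ : Measure α} {r : ℝ≥0∞}

lemma weakNorm_top (u : α → ℝ) :
    weakNorm μ ∞ u = essSup (fun x => (‖u x‖₊ : ℝ≥0∞)) μ :=
  if_pos rfl

lemma weakNorm_of_ne_top (hr : r ≠ ∞) (u : α → ℝ) :
    weakNorm μ r u = ⨆ l : ℝ≥0, (l : ℝ≥0∞) * μ {x | (l : ℝ) < |u x|} ^ (1 / r.toReal) :=
  if_neg hr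

lemma weakNorm_const_mul_indicator (hr : r ≠ 0) {c : ℝ} (hc : 0 ≤ c) {E : Set α}
    (hE : MeasurableSet E) (hE₀ : μ E ≠ 0) :
    weakNorm μ r (fun x => c * E.indicator 1 x) = ENNReal.ofReal c * μ E ^ (1 / r.toReal) := by
  by_cases hrtop : r = ∞
  · subst hrtop
    have hnorm : (fun x => (‖c * E.indicator 1 x‖₊ : ℝ≥0∞)) =
        E.indicator fun _ => ENNReal.ofReal c := by
      ext x
      by_cases hx : x ∈ E <;> simp [hx, ← enorm_eq_nnnorm, Real.enorm_of_nonneg hc]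
    rw [weakNorm_top, hnorm, essSup_indicator_eq_essSup_restrict hE,
      essSup_const _ (Measure.restrict_eq_zero.not.mpr hE₀)]
    simp
  · calc weakNorm μ r (fun x => c * E.indicator 1 x)
        = ⨆ l : ℝ≥0, (if (l : ℝ) < c then (l : ℝ≥0∞) else 0) * μ E ^ (1 / r.toReal) := by
          rw [weakNorm_of_ne_top hrtop]
          refine iSup_congr fun l => ?_
          rw [setOf_lt_abs_mul_indicator hc l.coe_nonneg]
          split_ifs <;> simp [ENNReal.toReal_pos hr hrtop]
      _ = ENNReal.ofReal c * μ E ^ (1 / r.toReal) := by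
          rw [← ENNReal.iSup_mul, iSup_ite_coe_lt_eq_ofReal]

lemma mul_measure_setOf_lt_abs_sum_rpow_mul_indicator_le {m : ℕ} {p : ℝ} (hp : 0 < p)
    {E : Fin m → Set α} (hEmeas : ∀ k, MeasurableSet (E k)) (hEdisj : Pairwise (Disjoint on E))
    (hE₀ : ∀ k, μ (E k) ≠ 0) (hEtop : ∀ k, μ (E k) ≠ ∞)
    (hhalf : ∀ (k : ℕ) (hk : k + 1 < m),
      μ (E ⟨k + 1, hk⟩) ≤ μ (E ⟨k, Nat.lt_of_succ_lt hk⟩) / 2) (l : ℝ≥0) :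
    (l : ℝ≥0∞) * μ {x | (l : ℝ) < |∑ k, (μ (E k)).toReal ^ (-p) * (E k).indicator 1 x|} ^ p
      ≤ 2 ^ p := by
  set c : Fin m → ℝ := fun k => (μ (E k)).toReal ^ (-p)
  rw [setOf_lt_abs_sum_mul_indicator hEdisj c l.coe_nonneg,
    measure_biUnion_finset (fun i _ j _ hij => hEdisj hij) (fun k _ => hEmeas k)]
  set S := Finset.univ.filter fun k => (l : ℝ) < |c k|
  rcases S.eq_empty_or_nonempty with hS | hS
  · simp [hS, ENNReal.zero_rpow_of_pos hp]
  set k₀ := S.min' hS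
  have hlk₀ : (l : ℝ) < c k₀ := by
    have := (Finset.mem_filter.mp (S.min'_mem hS)).2
    rwa [abs_of_nonneg (Real.rpow_nonneg ENNReal.toReal_nonneg _)] at this
  have hsum : ∑ k ∈ S, μ (E k) ≤ μ (E k₀) * 2 := by
    have hgeom := sum_le_mul_one_sub_inv_of_succ_le_mul (s := fun k => μ (E k)) (q := 2⁻¹)
      (fun k hk => (hhalf k hk).trans_eq (div_eq_mul_inv _ _)) S (k₀ := k₀)
      (fun k hk => S.min'_le k hk)
    rwa [ENNReal.one_sub_inv_two, inv_inv] at hgeom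
  calc (l : ℝ≥0∞) * (∑ k ∈ S, μ (E k)) ^ p
      ≤ ENNReal.ofReal (c k₀) * (μ (E k₀) * 2) ^ p := by
        gcongr
        rw [← ENNReal.ofReal_coe_nnreal]
        exact ENNReal.ofReal_le_ofReal hlk₀.le
    _ = ENNReal.ofReal (c k₀) * μ (E k₀) ^ p * 2 ^ p := by
        rw [ENNReal.mul_rpow_of_nonneg _ _ hp.le, mul_assoc]
    _ = 2 ^ p := by rw [ofReal_toReal_rpow_neg_mul_rpow p (hE₀ k₀) (hEtop k₀), one_mul]

lemma weakNorm_sum_rpow_mul_indicator_le (hr : r ≠ 0) {m : ℕ} {E : Fin m → Set α}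
    (hEmeas : ∀ k, MeasurableSet (E k)) (hEdisj : Pairwise (Disjoint on E))
    (hE₀ : ∀ k, μ (E k) ≠ 0) (hEtop : ∀ k, μ (E k) ≠ ∞)
    (hhalf : ∀ (k : ℕ) (hk : k + 1 < m),
      μ (E ⟨k + 1, hk⟩) ≤ μ (E ⟨k, Nat.lt_of_succ_lt hk⟩) / 2) :
    weakNorm μ r (fun x => ∑ k, (μ (E k)).toReal ^ (-(1 / r.toReal)) * (E k).indicator 1 x)
      ≤ 2 ^ (1 / r.toReal) := by
  by_cases hrtop : r = ∞
  · subst hrtop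
    rw [weakNorm_top]
    simp only [toReal_top, _root_.div_zero, neg_zero, Real.rpow_zero, one_mul, rpow_zero]
    refine essSup_le_of_ae_le 1 (ae_of_all _ fun x => ?_)
    have hlevel := setOf_lt_abs_sum_mul_indicator hEdisj (fun _ => (1 : ℝ)) zero_le_one
    have hx : x ∉ {x | (1 : ℝ) < |∑ k, (1 : ℝ) * (E k).indicator 1 x|} := by rw [hlevel]; simp
    simpa [← NNReal.coe_le_coe] using hx
  · rw [weakNorm_of_ne_top hrtop]
    exact iSup_le (mul_measure_setOf_lt_abs_sum_rpow_mul_indicator_le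
      (one_div_pos.mpr (ENNReal.toReal_pos hr hrtop)) hEmeas hEdisj hE₀ hEtop hhalf)

end WeakNorm

/-- For pairwise disjoint measurable sets `E_1,…,E_m` of finite positive
measures `s_k` with `s_{k+1} ≤ s_k / 2`, the functions `u_k = s_k^{-1/r} χ_{E_k}`
satisfy `‖u_k‖_{L^{r,∞}} = 1` while `‖∑ u_k‖_{L^{r,∞}} ≤ 2^{1/r}`.
(Conventions: `s^{-1/∞} = 1` and `2^{1/∞} = 1`, realized via `r.toReal = 0` for `r = ∞`.) -/
theorem weakNorm_of_disjoint_geometric_indicators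
    {α : Type*} [MeasurableSpace α] (μ : Measure α)
    (r : ℝ≥0∞) (hr : 0 < r) (m : ℕ) (E : Fin m → Set α)
    (hEmeas : ∀ k, MeasurableSet (E k))
    (hEdisj : ∀ i j, i ≠ j → Disjoint (E i) (E j))
    (hEpos : ∀ k, 0 < μ (E k))
    (hEfin : ∀ k, μ (E k) < ∞)
    (hhalf : ∀ (k : ℕ) (hk : k + 1 < m),
      μ (E ⟨k + 1, hk⟩) ≤ μ (E ⟨k, Nat.lt_of_succ_lt hk⟩) / 2) :
    (∀ k, weakNorm μ r
        (fun x => (μ (E k)).toReal ^ (-(1 / r.toReal)) * (E k).indicator 1 x) = 1) ∧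
      weakNorm μ r
        (fun x => ∑ k, (μ (E k)).toReal ^ (-(1 / r.toReal)) * (E k).indicator 1 x)
        ≤ (2 : ℝ≥0∞) ^ (1 / r.toReal) := by
  refine ⟨fun k => ?_, weakNorm_sum_rpow_mul_indicator_le hr.ne' hEmeas
    (fun i j => hEdisj i j) (fun k => (hEpos k).ne') (fun k => (hEfin k).ne) hhalf⟩
  rw [weakNorm_const_mul_indicator hr.ne' (Real.rpow_nonneg ENNReal.toReal_nonneg _) (hEmeas k)
    (hEpos k).ne', ofReal_toReal_rpow_neg_mul_rpow _ (hEpos k).ne' (hEfin k).ne]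
end

section
/- Let 1 ≤ p ≤ q < ∞. The identity embedding I : ℓ^p → ℓ^q of real sequence spaces has operator norm 1 and is maximally non-compact: its ball measure of non-compactness equals 1. Concretely, for every ρ ∈ (0,1), every m ∈ ℕ and all y^1,…,y^m ∈ ℓ^q, there exists x ∈ ℓ^p with ‖x‖_{ℓ^p} ≤ 1 (in fact x may be taken to be a standard basis vector e^j) such that ‖x − y^k‖_{ℓ^q} > ρ for every k = 1,…,m; hence the closed unit ball of ℓ^p cannot be covered by finitely many balls in ℓ^q of radius ρ < 1. -/
open scoped ENNReal NNReal

/-- The `ℓ^p` (quasi)norm of a real sequence, `(∑_j |x_j|^p)^{1/p}`, valued in `ℝ≥0∞`. -/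
noncomputable def seqLpNorm (p : ℝ) (x : ℕ → ℝ) : ℝ≥0∞ :=
  (∑' j, (‖x j‖₊ : ℝ≥0∞) ^ p) ^ (1 / p)

/-!
The basis vectors `e^j` all have norm one in every `ℓ^r`, while each fixed `y ∈ ℓ^q` has
coordinates tending to zero. So for finitely many `y^k`, some coordinate `j` has all `|y^k_j|`
so small that already the `j`-th coordinate of `e^j - y^k` has modulus larger than `ρ < 1`.
The norm bound of the embedding holds because coordinates of a vector in the unit ball of `ℓ^p`
are at most one in modulus, so raising them to the larger power `q` can only decrease them.
-/

open Filter Topology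

section seqLpNorm

variable {r : ℝ}

lemma seqLpNorm_le_one_iff (hr : 0 < r) (x : ℕ → ℝ) :
    seqLpNorm r x ≤ 1 ↔ ∑' j, (‖x j‖₊ : ℝ≥0∞) ^ r ≤ 1 := by
  rw [seqLpNorm, one_div, ENNReal.rpow_inv_le_iff hr, ENNReal.one_rpow]

lemma enorm_le_seqLpNorm (hr : 0 < r) (x : ℕ → ℝ) (j : ℕ) : ‖x j‖ₑ ≤ seqLpNorm r x := by
  rw [seqLpNorm, one_div, ENNReal.le_rpow_inv_iff hr]
  exact ENNReal.le_tsum j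

lemma seqLpNorm_single_one (hr : 0 < r) (j : ℕ) :
    seqLpNorm r (fun i => if i = j then 1 else 0) = 1 := by
  rw [seqLpNorm, tsum_eq_single j fun i hij => by simp [hij, ENNReal.zero_rpow_of_pos hr]]
  simp

lemma seqLpNorm_le_one_of_exponent_le {p q : ℝ} (hp : 0 < p) (hpq : p ≤ q) {x : ℕ → ℝ}
    (hx : seqLpNorm p x ≤ 1) : seqLpNorm q x ≤ 1 := by
  have hcoord : ∀ j, (‖x j‖₊ : ℝ≥0∞) ≤ 1 := fun j =>
    (enorm_le_seqLpNorm hp x j).trans hx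
  rw [seqLpNorm_le_one_iff hp] at hx
  rw [seqLpNorm_le_one_iff (hp.trans_le hpq)]
  exact (ENNReal.tsum_le_tsum fun j =>
    ENNReal.rpow_le_rpow_of_exponent_ge (hcoord j) hpq).trans hx

lemma tendsto_zero_of_seqLpNorm_lt_top (hr : 0 < r) {y : ℕ → ℝ} (hy : seqLpNorm r y < ∞) :
    Tendsto y atTop (𝓝 0) := by
  have hsum : ∑' j, (‖y j‖₊ : ℝ≥0∞) ^ r ≠ ∞ := by
    intro htop
    rw [seqLpNorm, htop, ENNReal.top_rpow_of_pos (by positivity)] at hy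
    exact lt_irrefl _ hy
  have hpow := (ENNReal.tendsto_atTop_zero_of_tsum_ne_top hsum).ennrpow_const r⁻¹
  simp only [← ENNReal.rpow_mul, mul_inv_cancel₀ hr.ne', ENNReal.rpow_one,
    ENNReal.zero_rpow_of_pos (inv_pos.2 hr)] at hpow
  exact tendsto_zero_iff_enorm_tendsto_zero.2 hpow

lemma exists_single_sub_gt_of_seqLpNorm_lt_top (hr : 0 < r) {ρ : ℝ≥0∞} (hρ : ρ < 1)
    {ι : Type*} [Finite ι] (y : ι → ℕ → ℝ) (hy : ∀ k, seqLpNorm r (y k) < ∞) :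
    ∃ j, ∀ k, ρ < seqLpNorm r (fun i => (if i = j then 1 else 0) - y k i) := by
  have hfar : ∀ᶠ j in atTop, ∀ k, ρ < ‖1 - y k j‖ₑ := by
    refine eventually_all.2 fun k => ?_
    have hlim := ((tendsto_zero_of_seqLpNorm_lt_top hr (hy k)).const_sub (1 : ℝ)).enorm
    rw [sub_zero, enorm_one] at hlim
    exact hlim.eventually_const_lt hρ
  obtain ⟨j, hj⟩ := hfar.exists
  refine ⟨j, fun k => (hj k).trans_le ?_⟩
  simpa using enorm_le_seqLpNorm hr (fun i => (if i = j then 1 else 0) - y k i) j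

end seqLpNorm

/-- For `1 ≤ p ≤ q < ∞`, the identity embedding `I : ℓ^p → ℓ^q` has norm `1`
and is maximally non-compact: it maps the unit ball into the unit ball, the standard basis
vector `e^0` has norm one in both spaces, and for every `ρ ∈ (0,1)`, `m ∈ ℕ` and
`y^1,…,y^m ∈ ℓ^q` there is a standard basis vector `x = e^j` (so `‖x‖_{ℓ^p} ≤ 1`)
with `‖x − y^k‖_{ℓ^q} > ρ` for all `k`. Hence the unit ball of `ℓ^p` cannot be covered
by finitely many balls in `ℓ^q` of radius `ρ < 1`, and the ball measure of
non-compactness of `I` equals `1`. -/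
theorem lp_into_lq_maximally_noncompact (p q : ℝ) (hp : 1 ≤ p) (hpq : p ≤ q) :
    (∀ x : ℕ → ℝ, seqLpNorm p x ≤ 1 → seqLpNorm q x ≤ 1) ∧
    (seqLpNorm p (fun i => if i = 0 then 1 else 0) = 1 ∧
      seqLpNorm q (fun i => if i = 0 then 1 else 0) = 1) ∧
    (∀ ρ : ℝ≥0∞, 0 < ρ → ρ < 1 →
      ∀ (m : ℕ) (y : Fin m → ℕ → ℝ), (∀ k, seqLpNorm q (y k) < ∞) →
        ∃ x : ℕ → ℝ, seqLpNorm p x ≤ 1 ∧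
          (∃ j : ℕ, x = fun i => if i = j then 1 else 0) ∧
          ∀ k, ρ < seqLpNorm q (fun i => x i - y k i)) := by
  have hp0 : 0 < p := one_pos.trans_le hp
  have hq0 : 0 < q := hp0.trans_le hpq
  refine ⟨fun x => seqLpNorm_le_one_of_exponent_le hp0 hpq,
    ⟨seqLpNorm_single_one hp0 0, seqLpNorm_single_one hq0 0⟩, ?_⟩
  intro ρ _ hρ m y hy
  obtain ⟨j, hj⟩ := exists_single_sub_gt_of_seqLpNorm_lt_top hq0 hρ y hy
  exact ⟨_, (seqLpNorm_single_one hp0 j).le, ⟨j, rfl⟩, hj⟩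
end

section
/- Let Ω ⊆ ℝ^n (n ∈ ℕ) be a nonempty measurable set of positive Lebesgue measure and let B be a set of essentially bounded measurable functions u : Ω → ℝ. Set M := sup_{u∈B} ‖u‖_{L^∞(Ω)} and σ := sup_{u∈B} (ess sup_Ω u − ess inf_Ω u), and assume M ≤ σ < ∞. Then for every ρ > σ/2 there exist m ∈ ℕ and real numbers λ_1,…,λ_m such that every u ∈ B satisfies ‖u − λ_k‖_{L^∞(Ω)} < ρ for some k ∈ {1,…,m}. In particular, if B is the unit ball of a quasinormed space X of measurable functions on Ω and the embedding I : X → L^∞(Ω) satisfies ‖I‖ ≤ σ(I), then the ball measure of non-compactness of I is at most σ(I)/2. -/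
open MeasureTheory ENNReal
open scoped NNReal

set_option maxHeartbeats 1000000 in

/-- Let `Ω ⊆ ℝ^n` be a nonempty measurable set of positive measure and
`B` a set of essentially bounded measurable functions on `Ω`. If
`M := sup_{u∈B} ‖u‖_{L^∞(Ω)}` and `σ := sup_{u∈B} (ess sup u − ess inf u)` satisfy
`M ≤ σ < ∞`, then for every `ρ > σ/2` there are finitely many constants `λ_1,…,λ_m`
such that every `u ∈ B` satisfies `‖u − λ_k‖_{L^∞(Ω)} < ρ` for some `k`; in particular,
if `B` is the unit ball of a quasinormed space `X` and `‖I‖ ≤ σ(I)` for the embedding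
`I : X → L^∞(Ω)`, the ball measure of non-compactness of `I` is at most `σ(I)/2`. -/
theorem covering_by_constants_of_span
    (n : ℕ) (Ω : Set (Fin n → ℝ)) (hΩmeas : MeasurableSet Ω)
    (hΩne : Ω.Nonempty) (hΩpos : 0 < volume Ω)
    (B : Set ((Fin n → ℝ) → ℝ))
    (hB : ∀ u ∈ B, Measurable u ∧ eLpNorm u ∞ (volume.restrict Ω) < ∞)
    (M σ : ℝ)
    (hM : IsLUB ((fun u => essSup (fun x => |u x|) (volume.restrict Ω)) '' B) M)
    (hσ : IsLUB ((fun u =>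
      essSup u (volume.restrict Ω) - essInf u (volume.restrict Ω)) '' B) σ)
    (hMσ : M ≤ σ)
    (ρ : ℝ) (hρ : σ / 2 < ρ) :
    ∃ (m : ℕ) (lam : Fin m → ℝ), ∀ u ∈ B, ∃ k,
      eLpNorm (fun x => u x - lam k) ∞ (volume.restrict Ω) < ENNReal.ofReal ρ := by
  classical
  have hν : volume.restrict Ω ≠ 0 := by
    rw [← Measure.measure_univ_ne_zero, Measure.restrict_apply_univ]
    exact hΩpos.ne'
  haveI : Filter.NeBot (ae (volume.restrict Ω)) := ae_neBot.2 hν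
  have hδ : 0 < ρ - σ / 2 := by linarith
  -- finite cover of [-σ, σ] by balls of radius δ/2
  obtain ⟨t, ht⟩ := (isCompact_Icc (a := -σ) (b := σ)).elim_finite_subcover
    (fun c : ℝ => Metric.ball c ((ρ - σ / 2) / 2)) (fun _ => Metric.isOpen_ball)
    (fun x _ => Set.mem_iUnion.2 ⟨x, Metric.mem_ball_self (by linarith)⟩)
  refine ⟨t.card, fun k => (t.equivFin.symm k : ℝ), ?_⟩
  intro u hu
  obtain ⟨humeas, hufin⟩ := hB u hu
  -- a.e. bound on |u|
  set C := (eLpNorm u ∞ (volume.restrict Ω)).toReal with hCdef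
  have hC : ∀ᵐ x ∂(volume.restrict Ω), |u x| ≤ C := by
    have h1 : ∀ᵐ x ∂(volume.restrict Ω), (‖u x‖₊ : ℝ≥0∞) ≤ eLpNormEssSup u (volume.restrict Ω) := ae_le_eLpNormEssSup
    have hE : eLpNormEssSup u (volume.restrict Ω) ≠ ∞ := by
      rw [← eLpNorm_exponent_top]; exact hufin.ne
    filter_upwards [h1] with x hx
    have := ENNReal.toReal_mono hE hx
    simpa [hCdef, eLpNorm_exponent_top, Real.norm_eq_abs] using this
  have hbdd_above : Filter.IsBoundedUnder (· ≤ ·) (ae (volume.restrict Ω)) u :=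
    ⟨C, Filter.eventually_map.2 (by filter_upwards [hC] with x hx; exact (le_abs_self _).trans hx)⟩
  have hbdd_below : Filter.IsBoundedUnder (· ≥ ·) (ae (volume.restrict Ω)) u :=
    ⟨-C, Filter.eventually_map.2 (by filter_upwards [hC] with x hx; exact neg_le_of_abs_le hx)⟩
  have habs_bdd : Filter.IsBoundedUnder (· ≤ ·) (ae (volume.restrict Ω)) (fun x => |u x|) :=
    ⟨C, Filter.eventually_map.2 (by filter_upwards [hC] with x hx; exact hx)⟩
  set a := essInf u (volume.restrict Ω) with hadef
  set b := essSup u (volume.restrict Ω) with hbdef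
  have hub : ∀ᵐ x ∂(volume.restrict Ω), u x ≤ b := ae_le_essSup hbdd_above
  have hlb : ∀ᵐ x ∂(volume.restrict Ω), a ≤ u x := ae_essInf_le hbdd_below
  have hab : a ≤ b := by
    obtain ⟨x, hx1, hx2⟩ := (hlb.and hub).exists
    exact hx1.trans hx2
  have hbaσ : b - a ≤ σ := hσ.1 ⟨u, hu, rfl⟩
  have hσ0 : 0 ≤ σ := le_trans (by linarith) hbaσ
  have hρ0 : 0 < ρ := by linarith
  -- essSup |u| ≤ M and a.e. |u| ≤ M
  have hsupM : essSup (fun x => |u x|) (volume.restrict Ω) ≤ M := hM.1 ⟨u, hu, rfl⟩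
  have haeM : ∀ᵐ x ∂(volume.restrict Ω), |u x| ≤ M := by
    filter_upwards [ae_le_essSup habs_bdd] with x hx
    exact hx.trans hsupM
  have hbM : b ≤ M := by
    refine Filter.limsup_le_of_le hbdd_below.isCoboundedUnder_le ?_
    filter_upwards [haeM] with x hx
    exact (le_abs_self _).trans hx
  have haM : -M ≤ a := by
    refine Filter.le_liminf_of_le hbdd_above.isCoboundedUnder_ge ?_
    filter_upwards [haeM] with x hx
    exact neg_le_of_abs_le hx
  -- midpoint lies in [-σ, σ]
  set c := (a + b) / 2 with hcdef
  have hcmem : c ∈ Set.Icc (-σ) σ := by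
    constructor
    · have : -σ ≤ -M := by linarith
      have : -σ ≤ a := this.trans haM
      simp only [hcdef]; linarith
    · have : b ≤ σ := hbM.trans hMσ
      simp only [hcdef]; linarith
  obtain ⟨c', hc'⟩ := Set.mem_iUnion.1 (ht hcmem)
  obtain ⟨hc't, hcc'⟩ := Set.mem_iUnion.1 hc'
  refine ⟨t.equivFin ⟨c', hc't⟩, ?_⟩
  have hlam : ((t.equivFin.symm (t.equivFin ⟨c', hc't⟩)) : ℝ) = c' := by simp
  simp only [hlam]
  have hdist : |c - c'| < (ρ - σ / 2) / 2 := by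
    have := Metric.mem_ball.1 hcc'
    rwa [Real.dist_eq] at this
  set r := σ / 2 + (ρ - σ / 2) / 2 with hrdef
  have hrρ : r < ρ := by simp only [hrdef]; linarith
  have hbound : ∀ᵐ x ∂(volume.restrict Ω), ‖u x - c'‖ ≤ r := by
    filter_upwards [hub, hlb] with x h1 h2
    have h3 : |u x - c| ≤ (b - a) / 2 := by
      rw [abs_le]; constructor <;> (simp only [hcdef]; linarith)
    have h4 : |u x - c'| ≤ |u x - c| + |c - c'| := by
      have : u x - c' = (u x - c) + (c - c') := by ring
      rw [this]; exact abs_add_le _ _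
    have : |u x - c'| ≤ (b - a) / 2 + (ρ - σ / 2) / 2 := by linarith [hdist.le]
    rw [Real.norm_eq_abs]
    simp only [hrdef]
    linarith
  calc eLpNorm (fun x => u x - c') ∞ (volume.restrict Ω)
      ≤ (volume.restrict Ω) Set.univ ^ (∞ : ℝ≥0∞).toReal⁻¹ * ENNReal.ofReal r :=
        eLpNorm_le_of_ae_bound hbound
    _ = ENNReal.ofReal r := by simp
    _ < ENNReal.ofReal ρ := (ENNReal.ofReal_lt_ofReal_iff hρ0).2 hrρ
end

section
/- Let Ω ⊆ ℝ^n (n ∈ ℕ) be a nonempty measurable set of positive Lebesgue measure, let ρ > 0, and let B be a set of measurable functions on Ω (thought of as the unit ball of a quasinormed space X). Assume that for every ℓ ∈ ℕ there exist measurable functions u_1,…,u_ℓ : Ω → ℝ with pairwise disjoint supports such that u_i − u_j ∈ B for all distinct i,j ∈ {1,…,ℓ} and 2ρ > ess sup_Ω u_k > ρ for every k = 1,…,ℓ. Then for every m ∈ ℕ and all essentially bounded measurable v_1,…,v_m : Ω → ℝ there exists w ∈ B with ‖w − v_j‖_{L^∞(Ω)} ≥ ρ for every j = 1,…,m. In particular,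 the ball measure of non-compactness of the embedding I : X → L^∞(Ω) is at least ρ. -/
/-!
Take `2 ^ m + 1` functions `u k` from the hypothesis and record for each of them the sign pattern
`j ↦ (v j > 0 a.e. on {u k > ρ})`; by pigeonhole two of them, `u i` and `u i'`, share it. If
`‖u i - u i' - v j‖∞ < ρ`, then, the supports being disjoint, `v j > 0` a.e. on `{u i > ρ}` and
`v j < 0` a.e. on `{u i' > ρ}`. The first set carries the positive pattern, so the second, of
positive measure since `ess sup u i' > ρ`, carries it too: a contradiction.
-/

open MeasureTheory ENNReal Function

section
variable {α : Type*} [MeasurableSpace α] {μ : Measure α}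

theorem measure_lt_ne_zero_of_lt_essSup {β : Type*} [CompleteLinearOrder β] {f : α → β} {c : β}
    (h : c < essSup f μ) : μ {x | c < f x} ≠ 0 := by
  intro h0
  refine h.not_ge (essSup_le_of_ae_le c (ae_iff.2 ?_))
  simpa only [not_le] using h0

theorem ae_abs_lt_of_eLpNorm_top_lt {f : α → ℝ} {c : ℝ} (h : eLpNorm f ∞ μ < ENNReal.ofReal c) :
    ∀ᵐ x ∂μ, |f x| < c := by
  filter_upwards [ae_le_eLpNormEssSup (f := f) (μ := μ)] with x hx
  rw [← eLpNorm_exponent_top, Real.enorm_eq_ofReal_abs] at hx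
  exact (ENNReal.ofReal_lt_ofReal_iff'.1 (hx.trans_lt h)).1

variable {f g v : α → ℝ} {c : ℝ}

theorem ae_pos_of_abs_sub_sub_lt (hc : 0 ≤ c) (hfg : Disjoint (support f) (support g))
    (h : ∀ᵐ x ∂μ, |f x - g x - v x| < c) : ∀ᵐ x ∂μ, c < f x → 0 < v x := by
  filter_upwards [h] with x hx hfx
  have hgx : g x = 0 :=
    notMem_support.1 (Set.disjoint_left.1 hfg (mem_support.2 (hc.trans_lt hfx).ne'))
  rw [hgx] at hx
  linarith [(abs_lt.1 hx).2]

theorem not_ae_pos_of_abs_sub_sub_lt (hc : 0 ≤ c) (hfg : Disjoint (support f) (support g))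
    (hg : μ {x | c < g x} ≠ 0) (h : ∀ᵐ x ∂μ, |f x - g x - v x| < c) :
    ¬ ∀ᵐ x ∂μ, c < g x → 0 < v x := by
  have h' : ∀ᵐ x ∂μ, |g x - f x - -v x| < c := by
    filter_upwards [h] with x hx
    rwa [← abs_neg, show -(g x - f x - -v x) = f x - g x - v x by ring]
  intro hpos
  have hnull : ∀ᵐ x ∂μ, ¬ c < g x := by
    filter_upwards [hpos, ae_pos_of_abs_sub_sub_lt hc hfg.symm h'] with x h₁ h₂ hgx
    linarith [h₁ hgx, h₂ hgx]
  exact hg (by simpa only [ae_iff, not_not] using hnull)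

theorem exists_ne_forall_ofReal_le_eLpNorm_top {m : ℕ} {u : Fin (2 ^ m + 1) → α → ℝ}
    (hc : 0 ≤ c) (hdisj : ∀ i j, i ≠ j → Disjoint (support (u i)) (support (u j)))
    (hu : ∀ k, μ {x | c < u k x} ≠ 0) (v : Fin m → α → ℝ) :
    ∃ i i', i ≠ i' ∧ ∀ j,
      ENNReal.ofReal c ≤ eLpNorm (fun x => u i x - u i' x - v j x) ∞ μ := by
  let pattern : Fin (2 ^ m + 1) → Fin m → Prop := fun k j => ∀ᵐ x ∂μ, c < u k x → 0 < v j x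
  obtain ⟨i, i', hne, heq⟩ := Fintype.exists_ne_map_eq_of_card_lt pattern (by simp)
  refine ⟨i, i', hne, fun j => le_of_not_gt fun hlt => ?_⟩
  have hae := ae_abs_lt_of_eLpNorm_top_lt hlt
  exact not_ae_pos_of_abs_sub_sub_lt hc (hdisj i i' hne) (hu i') hae
    ((congrFun heq j).mp (ae_pos_of_abs_sub_sub_lt hc (hdisj i i' hne) hae))
end

theorem noncompactness_lower_bound_into_linfty_general
    (n : ℕ) (Ω : Set (Fin n → ℝ))
    (ρ : ℝ) (hρ : 0 < ρ)
    (B : Set ((Fin n → ℝ) → ℝ))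
    (hB : ∀ ℓ : ℕ, ∃ u : Fin ℓ → (Fin n → ℝ) → ℝ,
      (∀ k, Measurable (u k)) ∧
      (∀ i j, i ≠ j → Disjoint (Function.support (u i)) (Function.support (u j))) ∧
      (∀ i j, i ≠ j → u i - u j ∈ B) ∧
      (∀ k, (ρ : EReal) < essSup (fun x => (u k x : EReal)) (volume.restrict Ω) ∧
        essSup (fun x => (u k x : EReal)) (volume.restrict Ω) < ((2 * ρ : ℝ) : EReal)))
    (m : ℕ) (v : Fin m → (Fin n → ℝ) → ℝ) :
    ∃ w ∈ B, ∀ j,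
      ENNReal.ofReal ρ ≤ eLpNorm (fun x => w x - v j x) ∞ (volume.restrict Ω) := by
  obtain ⟨u, -, hdisj, hsub, hess⟩ := hB (2 ^ m + 1)
  have hu : ∀ k, volume.restrict Ω {x | ρ < u k x} ≠ 0 := fun k => by
    simpa only [EReal.coe_lt_coe_iff] using measure_lt_ne_zero_of_lt_essSup (hess k).1
  obtain ⟨i, i', hne, hfar⟩ := exists_ne_forall_ofReal_le_eLpNorm_top hρ.le hdisj hu v
  exact ⟨u i - u i', hsub i i' hne, hfar⟩

/-- Let `Ω ⊆ ℝ^n` be a nonempty measurable set of positive measure,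
`ρ > 0`, and `B` a set of measurable functions on `Ω` (the unit ball of a quasinormed
space `X`). Assume that for every `ℓ ∈ ℕ` there are measurable functions `u_1,…,u_ℓ`
with pairwise disjoint supports such that `u_i − u_j ∈ B` for all distinct `i,j` and
`2ρ > ess sup u_k > ρ` for every `k`. Then for every finite family `v_1,…,v_m` of
essentially bounded measurable functions there is `w ∈ B` with
`‖w − v_j‖_{L^∞(Ω)} ≥ ρ` for every `j`; in particular the ball measure of
non-compactness of the embedding `I : X → L^∞(Ω)` is at least `ρ`. -/
theorem noncompactness_lower_bound_into_linfty
    (n : ℕ) (Ω : Set (Fin n → ℝ)) (hΩmeas : MeasurableSet Ω)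
    (hΩne : Ω.Nonempty) (hΩpos : 0 < volume Ω)
    (ρ : ℝ) (hρ : 0 < ρ)
    (B : Set ((Fin n → ℝ) → ℝ))
    (hB : ∀ ℓ : ℕ, ∃ u : Fin ℓ → (Fin n → ℝ) → ℝ,
      (∀ k, Measurable (u k)) ∧
      (∀ i j, i ≠ j → Disjoint (Function.support (u i)) (Function.support (u j))) ∧
      (∀ i j, i ≠ j → u i - u j ∈ B) ∧
      (∀ k, (ρ : EReal) < essSup (fun x => (u k x : EReal)) (volume.restrict Ω) ∧
        essSup (fun x => (u k x : EReal)) (volume.restrict Ω) < ((2 * ρ : ℝ) : EReal)))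
    (m : ℕ) (v : Fin m → (Fin n → ℝ) → ℝ)
    (hv : ∀ j, Measurable (v j) ∧ eLpNorm (v j) ∞ (volume.restrict Ω) < ∞) :
    ∃ w ∈ B, ∀ j,
      ENNReal.ofReal ρ ≤ eLpNorm (fun x => w x - v j x) ∞ (volume.restrict Ω) :=
  noncompactness_lower_bound_into_linfty_general n Ω ρ hρ B hB m v
end

section
/- Let N ∈ ℕ, let C be a finite set of colors, and let c be a map assigning to every pair (i,j) with 1 ≤ i < j ≤ N a color c(i,j) ∈ C, subject to the constraint that c(i,j) ≠ c(j,k) whenever 1 ≤ i < j < k ≤ N (i.e., for every j, the j-th row and the j-th column of the triangular grid share no color). Then N ≤ 2^{|C|}. Equivalently, any such coloring of the triangle with N = 2^m requires at least m colors. -/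
/-- Triangle coloring problem. If the cells `(i,j)` with `i < j` of a
triangular grid on `N` points are colored by a finite set of colors `C` in such a way
that for every `j` the `j`-th row and the `j`-th column share no color (i.e.
`c i j ≠ c j k` whenever `i < j < k`), then `N ≤ 2^{|C|}`; equivalently, coloring the
triangle with `N = 2^m` requires at least `m` colors. -/
theorem triangle_coloring_bound (N : ℕ) (C : Type*) [Fintype C]
    (c : Fin N → Fin N → C)
    (h : ∀ i j k : Fin N, i < j → j < k → c i j ≠ c j k) :
    N ≤ 2 ^ Fintype.card C := by
  classical
  set f : Fin N → Finset C := fun j => (Finset.univ.filter (fun i => i < j)).image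
    (fun i => c i j) with hf
  have hinj : Function.Injective f := by
    intro a b hab
    by_contra hne
    rcases lt_or_gt_of_ne hne with hlt | hlt
    · have hmem : c a b ∈ f b := by
        simp [hf, Finset.mem_image]
        exact ⟨a, hlt, rfl⟩
      rw [← hab] at hmem
      simp [hf, Finset.mem_image] at hmem
      obtain ⟨k, hk, hck⟩ := hmem
      exact h k a b hk hlt hck
    · have hmem : c b a ∈ f a := by
        simp [hf, Finset.mem_image]
        exact ⟨b, hlt, rfl⟩
      rw [hab] at hmem
      simp [hf, Finset.mem_image] at hmem
      obtain ⟨k, hk, hck⟩ := hmem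
      exact h k b a hk hlt hck
  calc N = Fintype.card (Fin N) := (Fintype.card_fin N).symm
    _ ≤ Fintype.card (Finset C) := Fintype.card_le_of_injective f hinj
    _ = 2 ^ Fintype.card C := Fintype.card_finset
end
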